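/- arXiv:2009.01731 — 4 statements merged into one kernel-verified Lean document; each statement's English description precedes it below -/
import Mathlib

section
/- For grid functions ũ : ℤ² → ℝ satisfying the forward-difference scheme (ũ_{i+1,j} − ũ_{i,j})/h₁ − ũ_{i,j}² = 0 and (ũ_{i,j+1} − ũ_{i,j})/h₂ + ũ_{i,j}² = 0 with h₁, h₂ > 0, the identity ũ_{i,j}⁴ = 0, and hence ũ_{i,j} = 0, holds for all (i,j). -/
theorem stmt_8 (h1 h2 : ℝ) (hh1 : 0 < h1) (hh2 : 0 < h2) (u : ℤ → ℤ → ℝ)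
    (hf1 : ∀ i j : ℤ, (u (i + 1) j - u i j) / h1 - (u i j) ^ 2 = 0)
    (hf2 : ∀ i j : ℤ, (u i (j + 1) - u i j) / h2 + (u i j) ^ 2 = 0) :
    ∀ i j : ℤ, (u i j) ^ 4 = 0 ∧ u i j = 0 := by
  have e1 : ∀ i j : ℤ, u (i + 1) j = u i j + h1 * (u i j) ^ 2 := by
    intro i j
    have := hf1 i j
    field_simp at this
    linarith
  have e2 : ∀ i j : ℤ, u i (j + 1) = u i j - h2 * (u i j) ^ 2 := by
    intro i j
    have := hf2 i j
    field_simp at this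
    linarith
  intro i j
  have A := e1 i j
  have B := e2 i j
  have C := e1 i (j + 1)
  have D := e2 (i + 1) j
  have h4 : h1 * h2 * (h1 + h2) * (u i j) ^ 4 = 0 := by
    rw [B] at C
    rw [A] at D
    rw [C] at D
    nlinarith [D]
  have hne : h1 * h2 * (h1 + h2) ≠ 0 := by positivity
  have hu4 : (u i j) ^ 4 = 0 := by
    rcases mul_eq_zero.mp h4 with h | h
    · exact absurd h hne
    · exact h
  exact ⟨hu4, by have := pow_eq_zero_iff (n := 4) (by norm_num) |>.mp hu4; exact this⟩
end

section
/- For arbitrary ũ : ℤ² → ℝ and h₁, h₂ > 0, setting f₁(i,j) = (ũ(i+1,j) − ũ(i,j))/h₁ − ũ(i,j)² and f₂(i,j) = (ũ(i,j+1) − ũ(i,j))/h₂ + ũ(i,j)², the following polynomial identity holds for all (i,j): h₂·f₂(i+1,j) − h₁·f₁(i,j+1) − (h₂·ũ(i+1,j) + h₁h₂·ũ(i,j)² + h₂·ũ(i,j) − 1)·h₁·f₁(i,j) − (h₁·ũ(i,j+1) − h₁h₂·ũ(i,j)² + h₁·ũ(i,j) + 1)·h₂·f₂(i,j) = h₁·h₂·(h₁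 + h₂)·ũ(i,j)⁴. -/
theorem stmt_9 (h1 h2 : ℝ) (hh1 : 0 < h1) (hh2 : 0 < h2) (u : ℤ → ℤ → ℝ)
    (f1 f2 : ℤ → ℤ → ℝ)
    (hf1 : ∀ a b : ℤ, f1 a b = (u (a + 1) b - u a b) / h1 - (u a b) ^ 2)
    (hf2 : ∀ a b : ℤ, f2 a b = (u a (b + 1) - u a b) / h2 + (u a b) ^ 2) :
    ∀ i j : ℤ,
      h2 * f2 (i + 1) j - h1 * f1 i (j + 1)
        - (h2 * u (i + 1) j + h1 * h2 * (u i j) ^ 2 + h2 * u i j - 1) * h1 * f1 i j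
        - (h1 * u i (j + 1) - h1 * h2 * (u i j) ^ 2 + h1 * u i j + 1) * h2 * f2 i j
      = h1 * h2 * (h1 + h2) * (u i j) ^ 4 := by
  intro i j
  simp only [hf1, hf2]
  field_simp
  ring
end

section
/- Let h₁, h₂ > 0 with h₁ ≠ h₂, and let ũ : ℤ² → ℝ satisfy the central-difference scheme (ũ_{i+2,j} − ũ_{i,j})/(2h₁) − ũ_{i+1,j}² = 0 and (ũ_{i,j+2} − ũ_{i,j})/(2h₂) + ũ_{i,j+1}² = 0 for all (i,j) ∈ ℤ². Then ũ_{i+1,j+1}²·((h₁+h₂)·ũ_{i+1,j+1}² − ũ_{i+1,j} + ũ_{i,j+1}) = 0 for all (i,j). -/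
theorem stmt_11 (h1 h2 : ℝ) (hh1 : 0 < h1) (hh2 : 0 < h2) (hne : h1 ≠ h2)
    (u : ℤ → ℤ → ℝ)
    (hf1 : ∀ i j : ℤ, (u (i + 2) j - u i j) / (2 * h1) - (u (i + 1) j) ^ 2 = 0)
    (hf2 : ∀ i j : ℤ, (u i (j + 2) - u i j) / (2 * h2) + (u i (j + 1)) ^ 2 = 0) :
    ∀ i j : ℤ,
      (u (i + 1) (j + 1)) ^ 2 *
        ((h1 + h2) * (u (i + 1) (j + 1)) ^ 2 - u (i + 1) j + u i (j + 1)) = 0 := by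
  intro i j
  have h1n : h1 ≠ 0 := ne_of_gt hh1
  have h2n : h2 ≠ 0 := ne_of_gt hh2
  have E1 : u (i + 2) (j + 1) - u i (j + 1) = 2 * h1 * (u (i + 1) (j + 1)) ^ 2 := by
    have := hf1 i (j + 1); field_simp at this; linarith
  have E2 : u (i + 1) (j + 2) - u (i + 1) j = -(2 * h2 * (u (i + 1) (j + 1)) ^ 2) := by
    have := hf2 (i + 1) j; field_simp at this; linarith
  have E3 : u (i + 2) (j + 2) - u i (j + 2) = 2 * h1 * (u (i + 1) (j + 2)) ^ 2 := by
    have := hf1 i (j + 2); field_simp at this; linarith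
  have E4 : u (i + 2) (j + 2) - u (i + 2) j = -(2 * h2 * (u (i + 2) (j + 1)) ^ 2) := by
    have := hf2 (i + 2) j; field_simp at this; linarith
  have E5 : u (i + 2) j - u i j = 2 * h1 * (u (i + 1) j) ^ 2 := by
    have := hf1 i j; field_simp at this; linarith
  have E6 : u i (j + 2) - u i j = -(2 * h2 * (u i (j + 1)) ^ 2) := by
    have := hf2 i j; field_simp at this; linarith
  set M := (u (i + 1) (j + 1)) ^ 2 with hM
  set A := u (i + 1) (j + 2)
  set B := u (i + 1) j
  set C := u (i + 2) (j + 1)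
  set D := u i (j + 1)
  have key : (8 * h1 * h2) * (M * ((h1 + h2) * M - B + D)) = 0 := by
    linear_combination (-1 : ℝ) * E3 + E5 + E4 - E6
      + (-4 * h1 * h2 * M - 2 * h2 * (C + D)) * E1
      + (4 * h1 * h2 * M - 2 * h1 * (A + B)) * E2
  have h8 : (8 * h1 * h2 : ℝ) ≠ 0 := by positivity
  exact (mul_eq_zero.mp key).resolve_left h8
end

section
/- Let h > 0 and ũ, ṽ : ℤ² → ℝ satisfy the forward-difference scheme (ũ_{i+1,j} − ũ_{i,j})/h − ũ_{i,j}·ṽ_{i,j} = 0 and (ṽ_{i,j+1} − ṽ_{i,j})/h + ũ_{i,j}·ṽ_{i,j} = 0 for all (i,j). Then the passivity consequence ũ_{i,j}·ũ_{i+1,j+1} + (h·ũ_{i,j} − 1)·ũ_{i,j+1}·ũ_{i+1,j} − h·ũ_{i,j}²·ũ_{i,j+1} = 0 holds for all (i,j). -/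
theorem stmt_12 (h : ℝ) (hh : 0 < h) (u v : ℤ → ℤ → ℝ)
    (hf1 : ∀ i j : ℤ, (u (i + 1) j - u i j) / h - u i j * v i j = 0)
    (hf2 : ∀ i j : ℤ, (v i (j + 1) - v i j) / h + u i j * v i j = 0) :
    ∀ i j : ℤ,
      u i j * u (i + 1) (j + 1) + (h * u i j - 1) * u i (j + 1) * u (i + 1) j
        - h * (u i j) ^ 2 * u i (j + 1) = 0 := by
  intro i j
  have h1 := hf1 i j
  have h1' := hf1 i (j + 1)
  have h2 := hf2 i j
  have hne : h ≠ 0 := hh.ne'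
  field_simp at h1 h1' h2
  linear_combination (u i j) * h1' + (h * u i j - 1) * (u i (j + 1)) * h1 + h * (u i j) * (u i (j + 1)) * h2
end
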